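/- Let X be a real Banach space whose norm is uniformly convex and uniformly smooth, let p > 1, and let f : X → ℝ be bounded below and uniformly continuous on every bounded subset of X. Then Δ_n^p f → f uniformly on every bounded subset of X as n → ∞. -/

import Mathlib

/-! Uniform convexity of the norm makes `‖·‖ ^ p` uniformly convex on bounded sets: the kernel
`Kp p x y = 2 ^ p * ((‖x‖ ^ p + ‖y‖ ^ p) / 2 - ‖midpoint ℝ x y‖ ^ p)` is bounded below by some
`η > 0` when `‖x‖ ≤ R` and `‖x - y‖ ≥ r`, and by `p`-homogeneity `y` need not be bounded.

Taking `y = x` in the infimum gives `Δ_n^p f ≤ f`. Conversely, for `‖x‖ ≤ R` and a subgradient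
`j` of `‖·‖ ^ p` at `x`, the affine function `z ↦ f x - ε + 2 ^ (p - 1) n (‖x‖ ^ p + j (z - x))`
lies below `g_n^p`: near `x` by the uniform continuity of `f`, and away from `x` because `n η`
eventually exceeds the oscillation of `f`. So the convex envelope of `g_n^p` at `x` is at least
`f x - ε + 2 ^ (p - 1) n ‖x‖ ^ p`, uniformly in `x`. -/

open scoped BigOperators

/-- The convex envelope of a function `h : X → ℝ`, given by the infimum over all
finite convex combinations. -/
noncomputable def convEnv {X : Type*} [NormedAddCommGroup X] [NormedSpace ℝ X]
    (h : X → ℝ) (x : X) : ℝ :=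
  sInf { r : ℝ | ∃ (m : ℕ) (l : Fin m → ℝ) (z : Fin m → X),
    (∀ i, 0 < l i) ∧ ∑ i, l i = 1 ∧ ∑ i, l i • z i = x ∧ ∑ i, l i * h (z i) = r }

/-- The kernel `K_p(x,y) = 2^(p-1)‖x‖^p + 2^(p-1)‖y‖^p - ‖x+y‖^p`. -/
noncomputable def Kp {X : Type*} [NormedAddCommGroup X] (p : ℝ) (x y : X) : ℝ :=
  2 ^ (p - 1) * ‖x‖ ^ p + 2 ^ (p - 1) * ‖y‖ ^ p - ‖x + y‖ ^ p

/-- `g_n^p(x) = inf_y (f(y) + n K_p(x,y)) + 2^(p-1) n ‖x‖^p` for real-valued `f`. -/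
noncomputable def gnpR {X : Type*} [NormedAddCommGroup X] (p : ℝ) (f : X → ℝ)
    (n : ℕ) (x : X) : ℝ :=
  (⨅ y, f y + (n : ℝ) * Kp p x y) + 2 ^ (p - 1) * (n : ℝ) * ‖x‖ ^ p

/-- `Δ_n^p f = co(g_n^p) - 2^(p-1) n ‖·‖^p` for real-valued `f`. -/
noncomputable def DeltaR {X : Type*} [NormedAddCommGroup X] [NormedSpace ℝ X]
    (p : ℝ) (f : X → ℝ) (n : ℕ) (x : X) : ℝ :=
  convEnv (gnpR p f n) x - 2 ^ (p - 1) * (n : ℝ) * ‖x‖ ^ p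

open Real Set Metric Filter

lemma tangent_line_le_rpow {p s t : ℝ} (hp : 1 ≤ p) (hs : 0 ≤ s) (ht : 0 ≤ t) :
    s ^ p + p * s ^ (p - 1) * (t - s) ≤ t ^ p := by
  rcases hp.eq_or_lt with rfl | hp'
  · simp
  rcases hs.eq_or_lt with rfl | hs
  · simp [zero_rpow (by linarith : p ≠ 0), zero_rpow (by linarith : p - 1 ≠ 0), rpow_nonneg ht]
  have bernoulli := one_add_mul_self_le_rpow_one_add (by linarith [div_nonneg ht hs.le] :
    -1 ≤ t / s - 1) hp
  rw [add_sub_cancel, div_rpow ht hs.le, le_div_iff₀ (rpow_pos_of_pos hs p)] at bernoulli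
  calc s ^ p + p * s ^ (p - 1) * (t - s) = (1 + p * (t / s - 1)) * s ^ p := by
        rw [rpow_sub_one hs.ne']; field_simp
    _ ≤ t ^ p := bernoulli

lemma exists_rpow_midpoint_gap {p : ℝ} (hp : 1 < p) (R : ℝ) {θ : ℝ} (hθ : 0 < θ) :
    ∃ η > 0, ∀ a b : ℝ, 0 ≤ a → b ≤ R → a + θ ≤ b →
      ((a + b) / 2) ^ p + η ≤ (a ^ p + b ^ p) / 2 := by
  let K : Set (ℝ × ℝ) := Icc 0 R ×ˢ Icc 0 R ∩ {q | q.1 + θ ≤ q.2}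
  have hK : IsCompact K :=
    (isCompact_Icc.prod isCompact_Icc).inter_right (isClosed_le (by fun_prop) (by fun_prop))
  have hcont : Continuous fun x : ℝ => x ^ p := continuous_rpow_const (by linarith)
  obtain ⟨η, hη, hgap⟩ := hK.exists_forall_le' (a := 0)
    (f := fun q => (q.1 ^ p + q.2 ^ p) / 2 - ((q.1 + q.2) / 2) ^ p) (by fun_prop) <| by
      rintro ⟨a, b⟩ ⟨⟨⟨ha, -⟩, -, -⟩, hab : a + θ ≤ b⟩
      have := (strictConvexOn_rpow hp).2 (mem_Ici.2 ha) (mem_Ici.2 (by linarith : 0 ≤ b))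
        (by linarith : a ≠ b) (by norm_num : (0 : ℝ) < 1 / 2) (by norm_num : (0 : ℝ) < 1 / 2)
        (by norm_num)
      simp only [smul_eq_mul] at this
      rw [show 1 / 2 * a + 1 / 2 * b = (a + b) / 2 by ring] at this
      dsimp only
      linarith
  refine ⟨η, hη, fun a b ha hb hab => ?_⟩
  have := hgap (a, b) ⟨⟨⟨ha, by linarith⟩, by linarith, hb⟩, hab⟩
  dsimp only at this
  linarith

section NormPower

variable {X : Type*} [NormedAddCommGroup X] [NormedSpace ℝ X]

lemma exists_subgradient_norm_rpow {p : ℝ} (hp : 1 ≤ p) (w : X) :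
    ∃ j : X →L[ℝ] ℝ, ∀ z : X, ‖w‖ ^ p + j (z - w) ≤ ‖z‖ ^ p := by
  rcases eq_or_ne w 0 with rfl | hw
  · exact ⟨0, fun z => by simp [zero_rpow (by linarith : p ≠ 0), rpow_nonneg]⟩
  obtain ⟨j₀, hj₀, hj₀w⟩ := exists_dual_vector ℝ w (norm_ne_zero_iff.2 hw)
  refine ⟨(p * ‖w‖ ^ (p - 1)) • j₀, fun z => ?_⟩
  have hj₀z : j₀ z ≤ ‖z‖ := by
    simpa [hj₀] using (le_abs_self _).trans (j₀.le_opNorm z)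
  have hcoef : 0 ≤ p * ‖w‖ ^ (p - 1) := by positivity
  calc ‖w‖ ^ p + ((p * ‖w‖ ^ (p - 1)) • j₀) (z - w)
      = ‖w‖ ^ p + p * ‖w‖ ^ (p - 1) * (j₀ z - ‖w‖) := by simp [hj₀w]
    _ ≤ ‖w‖ ^ p + p * ‖w‖ ^ (p - 1) * (‖z‖ - ‖w‖) := by gcongr
    _ ≤ ‖z‖ ^ p := tangent_line_le_rpow hp (norm_nonneg w) (norm_nonneg z)

lemma exists_norm_rpow_midpoint_gap [UniformConvexSpace X] {p : ℝ} (hp : 1 < p) {R r : ℝ}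
    (hR : 0 < R) (hr : 0 < r) :
    ∃ η > 0, ∀ x y : X, ‖x‖ ≤ R → ‖y‖ ≤ R → r ≤ ‖x - y‖ →
      ‖midpoint ℝ x y‖ ^ p + η ≤ (‖x‖ ^ p + ‖y‖ ^ p) / 2 := by
  obtain ⟨δ, hδ, hUC⟩ := exists_forall_closed_ball_dist_add_le_two_sub X (div_pos hr hR)
  set θ := r * δ / 8 with hθ
  obtain ⟨η, hη, hradial⟩ := exists_rpow_midpoint_gap hp R (θ := θ) (by positivity)
  refine ⟨min η (θ ^ p), by positivity, fun x y hx hy hxy => ?_⟩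
  wlog hxy' : ‖x‖ ≤ ‖y‖ generalizing x y
  · rw [midpoint_comm, add_comm (‖x‖ ^ p)]
    exact this y x hy hx (by rwa [norm_sub_rev]) (le_of_not_ge hxy')
  have hm : ‖midpoint ℝ x y‖ = ‖x + y‖ / 2 := by
    rw [midpoint_eq_smul_add, norm_smul]; norm_num; ring
  rcases le_or_gt (‖x‖ + θ) ‖y‖ with hfar | hnear
  · calc ‖midpoint ℝ x y‖ ^ p + min η (θ ^ p) ≤ ((‖x‖ + ‖y‖) / 2) ^ p + η := by
          gcongr
          · rw [hm]; gcongr; exact norm_add_le x y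
          · exact min_le_left _ _
      _ ≤ _ := hradial _ _ (norm_nonneg x) hy hfar
  · -- rescale by `‖y‖` to use uniform convexity in the unit ball
    set b := ‖y‖
    have hb : r / 2 ≤ b := by linarith [norm_sub_le x y]
    have hb0 : 0 < b := by linarith
    have hsum : ‖x + y‖ ≤ b * (2 - δ) := by
      have h := @hUC (b⁻¹ • x) ?_ (b⁻¹ • y) ?_ ?_
      · rwa [← smul_add, norm_smul, norm_inv, norm_of_nonneg hb0.le, inv_mul_le_iff₀ hb0] at h
      · rw [norm_smul, norm_inv, norm_of_nonneg hb0.le, inv_mul_le_one₀ hb0]; exact hxy'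
      · rw [norm_smul, norm_inv, norm_of_nonneg hb0.le, inv_mul_cancel₀ hb0.ne']
      · rw [← smul_sub, norm_smul, norm_inv, norm_of_nonneg hb0.le, ← div_eq_inv_mul,
          div_le_div_iff₀ hR hb0]
        nlinarith
    have hmx : ‖midpoint ℝ x y‖ + θ ≤ ‖x‖ := by
      rw [hm]; nlinarith
    calc ‖midpoint ℝ x y‖ ^ p + min η (θ ^ p) ≤ ‖midpoint ℝ x y‖ ^ p + θ ^ p := by
          gcongr; exact min_le_right _ _
      _ ≤ (‖midpoint ℝ x y‖ + θ) ^ p :=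
          add_rpow_le_rpow_add (norm_nonneg _) (by positivity) hp.le
      _ ≤ ‖x‖ ^ p := by gcongr
      _ ≤ (‖x‖ ^ p + ‖y‖ ^ p) / 2 := by
          have : ‖x‖ ^ p ≤ ‖y‖ ^ p := by gcongr
          linarith

end NormPower

section Kernel

variable {X : Type*} [NormedAddCommGroup X] [NormedSpace ℝ X]

lemma Kp_eq_two_rpow_mul (p : ℝ) (x y : X) :
    Kp p x y = 2 ^ p * ((‖x‖ ^ p + ‖y‖ ^ p) / 2 - ‖midpoint ℝ x y‖ ^ p) := by
  have hm : ‖x + y‖ = 2 * ‖midpoint ℝ x y‖ := by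
    rw [midpoint_eq_smul_add, norm_smul]; norm_num; ring
  have h2 : (2 : ℝ) ^ p = 2 ^ (p - 1) * 2 := by
    rw [← rpow_add_one two_ne_zero]; ring_nf
  rw [Kp, hm, mul_rpow zero_le_two (norm_nonneg _), h2]
  ring

lemma Kp_self {p : ℝ} (x : X) : Kp p x x = 0 := by
  simp [Kp_eq_two_rpow_mul]

lemma Kp_smul {p t : ℝ} (ht : 0 ≤ t) (x y : X) :
    Kp p (t • x) (t • y) = t ^ p * Kp p x y := by
  simp only [Kp, ← smul_add, norm_smul, norm_of_nonneg ht, mul_rpow ht (norm_nonneg _)]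
  ring

lemma Kp_nonneg {p : ℝ} (hp : 1 ≤ p) (x y : X) : 0 ≤ Kp p x y := by
  have hmean : ((‖x‖ + ‖y‖) / 2) ^ p ≤ (‖x‖ ^ p + ‖y‖ ^ p) / 2 := by
    have := (convexOn_rpow hp).2 (mem_Ici.2 (norm_nonneg x)) (mem_Ici.2 (norm_nonneg y))
      (by norm_num : (0 : ℝ) ≤ 1 / 2) (by norm_num : (0 : ℝ) ≤ 1 / 2) (by norm_num)
    simp only [smul_eq_mul] at this
    rw [show 1 / 2 * ‖x‖ + 1 / 2 * ‖y‖ = (‖x‖ + ‖y‖) / 2 by ring] at this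
    linarith
  have hmid : ‖midpoint ℝ x y‖ ≤ (‖x‖ + ‖y‖) / 2 := by
    rw [midpoint_eq_smul_add, norm_smul]; norm_num
    linarith [norm_add_le x y]
  rw [Kp_eq_two_rpow_mul]
  have : ‖midpoint ℝ x y‖ ^ p ≤ ((‖x‖ + ‖y‖) / 2) ^ p := by gcongr
  have : (0 : ℝ) ≤ 2 ^ p := by positivity
  nlinarith

lemma exists_Kp_ge_of_norm_le [UniformConvexSpace X] {p : ℝ} (hp : 1 < p) {R r : ℝ}
    (hR : 0 < R) (hr : 0 < r) :
    ∃ η > 0, ∀ x y : X, ‖x‖ ≤ R → ‖y‖ ≤ R → r ≤ ‖x - y‖ → η ≤ Kp p x y := by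
  obtain ⟨η, hη, hgap⟩ := exists_norm_rpow_midpoint_gap (X := X) hp hR hr
  refine ⟨2 ^ p * η, by positivity, fun x y hx hy hxy => ?_⟩
  rw [Kp_eq_two_rpow_mul]
  gcongr
  linarith [hgap x y hx hy hxy]

lemma exists_Kp_ge [UniformConvexSpace X] {p : ℝ} (hp : 1 < p) {R r : ℝ}
    (hR : 0 < R) (hr : 0 < r) :
    ∃ η > 0, ∀ x y : X, ‖x‖ ≤ R → r ≤ ‖x - y‖ → η ≤ Kp p x y := by
  obtain ⟨η₁, hη₁, hnear⟩ := exists_Kp_ge_of_norm_le (X := X) hp (by positivity : 0 < 2 * R) hr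
  obtain ⟨η₀, hη₀, hunit⟩ := exists_Kp_ge_of_norm_le (X := X) hp one_pos one_half_pos
  refine ⟨min η₁ ((2 * R) ^ p * η₀), by positivity, fun x y hx hxy => ?_⟩
  rcases le_or_gt ‖y‖ (2 * R) with hy | hy
  · exact (min_le_left _ _).trans (hnear x y (by linarith) hy hxy)
  set t := ‖y‖
  have ht : 0 < t := by linarith
  have hxt : ‖t⁻¹ • x‖ ≤ 1 / 2 := by
    rw [norm_smul, norm_inv, norm_of_nonneg ht.le, inv_mul_le_iff₀ ht]; linarith
  have hyt : ‖t⁻¹ • y‖ = 1 := by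
    rw [norm_smul, norm_inv, norm_of_nonneg ht.le, inv_mul_cancel₀ ht.ne']
  have hK := hunit (t⁻¹ • x) (t⁻¹ • y) (by linarith) hyt.le
    (by linarith [norm_sub_norm_le (t⁻¹ • y) (t⁻¹ • x), norm_sub_rev (t⁻¹ • x) (t⁻¹ • y)])
  have hscale : Kp p x y = t ^ p * Kp p (t⁻¹ • x) (t⁻¹ • y) := by
    rw [Kp_smul (inv_nonneg.2 ht.le), ← mul_assoc, ← mul_rpow ht.le (inv_nonneg.2 ht.le),
      mul_inv_cancel₀ ht.ne', one_rpow, one_mul]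
  calc min η₁ ((2 * R) ^ p * η₀) ≤ (2 * R) ^ p * η₀ := min_le_right _ _
    _ ≤ t ^ p * Kp p (t⁻¹ • x) (t⁻¹ • y) := by gcongr
    _ = Kp p x y := hscale.symm

lemma Kp_le_of_subgradient {p : ℝ} {w : X} {j : X →L[ℝ] ℝ}
    (hj : ∀ u, ‖w‖ ^ p + j (u - w) ≤ ‖u‖ ^ p) (z : X) :
    Kp p w z ≤ 2 ^ (p - 1) * (‖z‖ ^ p - ‖w‖ ^ p - j (z - w)) := by
  have hm := hj (midpoint ℝ w z)
  rw [midpoint_sub_left, map_smul, smul_eq_mul] at hm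
  have h2 : (2 : ℝ) ^ p = 2 ^ (p - 1) * 2 := by
    rw [← rpow_add_one two_ne_zero]; ring_nf
  rw [Kp_eq_two_rpow_mul, h2]
  have : (0 : ℝ) ≤ 2 ^ (p - 1) := by positivity
  rw [invOf_eq_inv] at hm
  linarith [mul_le_mul_of_nonneg_left hm this]

end Kernel

section Envelope

variable {X : Type*} [NormedAddCommGroup X] [NormedSpace ℝ X]

lemma convEnv_le_self {h : X → ℝ} (hh : BddBelow (range h)) (x : X) : convEnv h x ≤ h x := by
  obtain ⟨m, hm⟩ := hh
  refine csInf_le ⟨m, ?_⟩ ⟨1, fun _ => 1, fun _ => x, fun _ => one_pos, by simp, by simp, by simp⟩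
  rintro _ ⟨k, l, z, hl, hl1, -, rfl⟩
  calc m = ∑ i, l i * m := by rw [← Finset.sum_mul, hl1, one_mul]
    _ ≤ ∑ i, l i * h (z i) := by
        gcongr with i; exact (hl i).le; exact hm (mem_range_self _)

lemma ConvexOn.le_convEnv {φ h : X → ℝ} (hφ : ConvexOn ℝ univ φ) (hle : ∀ z, φ z ≤ h z)
    (x : X) : φ x ≤ convEnv h x := by
  refine le_csInf ⟨h x, 1, fun _ => 1, fun _ => x, fun _ => one_pos, by simp, by simp, by simp⟩ ?_
  rintro _ ⟨k, l, z, hl, hl1, rfl, rfl⟩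
  calc φ (∑ i, l i • z i) ≤ ∑ i, l i • φ (z i) :=
        hφ.map_sum_le (fun i _ => (hl i).le) hl1 (fun i _ => mem_univ _)
    _ ≤ ∑ i, l i * h (z i) := by
        simp only [smul_eq_mul]
        gcongr with i; exact (hl i).le; exact hle _

end Envelope

section Approximation

variable {X : Type*} [NormedAddCommGroup X]

lemma add_le_gnpR {p : ℝ} {f : X → ℝ} {n : ℕ} {z : X} {b : ℝ}
    (hb : ∀ y, b ≤ f y + n * Kp p z y) : b + 2 ^ (p - 1) * n * ‖z‖ ^ p ≤ gnpR p f n z := by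
  rw [gnpR]
  gcongr
  exact le_ciInf hb

variable [NormedSpace ℝ X]

lemma le_add_mul_Kp {p : ℝ} (hp : 1 ≤ p) {f : X → ℝ} {m : ℝ} (hm : ∀ y, m ≤ f y) (n : ℕ)
    (z y : X) : m ≤ f y + n * Kp p z y := by
  nlinarith [hm y, Kp_nonneg hp z y, n.cast_nonneg (α := ℝ)]

lemma gnpR_le {p : ℝ} (hp : 1 ≤ p) {f : X → ℝ} {m : ℝ} (hm : ∀ y, m ≤ f y) (n : ℕ) (x : X) :
    gnpR p f n x ≤ f x + 2 ^ (p - 1) * n * ‖x‖ ^ p := by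
  have hbdd : BddBelow (range fun y => f y + n * Kp p x y) :=
    ⟨m, by rintro _ ⟨y, rfl⟩; exact le_add_mul_Kp hp hm n x y⟩
  have := ciInf_le hbdd x
  simp only [Kp_self, mul_zero, add_zero] at this
  rw [gnpR]
  linarith

lemma DeltaR_le {p : ℝ} (hp : 1 ≤ p) {f : X → ℝ} {m : ℝ} (hm : ∀ y, m ≤ f y) (n : ℕ) (x : X) :
    DeltaR p f n x ≤ f x := by
  have hbdd : BddBelow (range (gnpR p f n)) := by
    refine ⟨m, ?_⟩
    rintro _ ⟨z, rfl⟩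
    have := add_le_gnpR (le_add_mul_Kp hp hm n z)
    have : 0 ≤ 2 ^ (p - 1) * n * ‖z‖ ^ p := by positivity
    linarith
  rw [DeltaR]
  linarith [convEnv_le_self hbdd x, gnpR_le hp hm n x]

end Approximation

lemma UniformContinuousOn.bddAbove_image_closedBall {X : Type*} [NormedAddCommGroup X]
    [NormedSpace ℝ X] {f : X → ℝ} {R : ℝ} (hf : UniformContinuousOn f (closedBall 0 R)) :
    BddAbove (f '' closedBall 0 R) := by
  obtain ⟨δ, hδ, hfδ⟩ := Metric.uniformContinuousOn_iff.1 hf 1 one_pos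
  obtain ⟨N, hN⟩ := exists_nat_gt (R / δ)
  refine ⟨f 0 + N, ?_⟩
  rintro _ ⟨x, hx, rfl⟩
  rw [mem_closedBall_zero_iff] at hx
  have hN0 : (0 : ℝ) < N := (div_nonneg ((norm_nonneg x).trans hx) hδ.le).trans_lt hN
  have hmem : ∀ k ≤ N, ((k : ℝ) / N) • x ∈ closedBall (0 : X) R := fun k hk => by
    rw [mem_closedBall_zero_iff, norm_smul, norm_of_nonneg (by positivity)]
    calc (k : ℝ) / N * ‖x‖ ≤ 1 * ‖x‖ := by
          gcongr; rw [div_le_one hN0]; exact_mod_cast hk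
      _ ≤ R := by rwa [one_mul]
  -- walk from `0` to `x` in `N` steps of length `‖x‖ / N < δ`, gaining at most `1` per step
  have hwalk : ∀ k ≤ N, f (((k : ℝ) / N) • x) ≤ f 0 + k := by
    intro k
    induction k with
    | zero => intro _; simp
    | succ k ih =>
      intro hk
      have hdist : dist ((((k + 1 : ℕ) : ℝ) / N) • x) (((k : ℝ) / N) • x) < δ := by
        rw [dist_eq_norm, ← sub_smul, norm_smul]
        calc _ = ‖x‖ / N := by
              push_cast
              rw [← sub_div, add_sub_cancel_left, norm_div, norm_one, RCLike.norm_natCast]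
              ring
          _ ≤ R / N := by gcongr
          _ < δ := by rwa [div_lt_iff₀ hN0, mul_comm, ← div_lt_iff₀ hδ]
      have := hfδ _ (hmem _ hk) _ (hmem k (by omega)) hdist
      rw [Real.dist_eq, abs_lt] at this
      push_cast at this ⊢
      linarith [ih (by omega)]
  simpa [hN0.ne'] using hwalk N le_rfl

section Convergence

variable {X : Type*} [NormedAddCommGroup X] [NormedSpace ℝ X] [UniformConvexSpace X]

lemma eventually_sub_le_DeltaR {p : ℝ} (hp : 1 < p) {f : X → ℝ} {m : ℝ} (hm : ∀ y, m ≤ f y)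
    {R : ℝ} (hR : 0 < R) (hf : UniformContinuousOn f (closedBall 0 (R + 2))) {ε : ℝ}
    (hε : 0 < ε) : ∀ᶠ n : ℕ in atTop, ∀ x : X, ‖x‖ ≤ R → f x - ε ≤ DeltaR p f n x := by
  obtain ⟨M, hM⟩ := hf.bddAbove_image_closedBall
  obtain ⟨δ, hδ, hfδ⟩ := Metric.uniformContinuousOn_iff.1 hf ε hε
  set r := min (δ / 2) 1
  have hr : 0 < r := by positivity
  obtain ⟨η, hη, hK⟩ := exists_Kp_ge (X := X) hp (by linarith : 0 < R + 1) hr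
  obtain ⟨N, hN⟩ := exists_nat_ge ((M - m) / η)
  filter_upwards [eventually_ge_atTop N] with n hn x hx
  have hfx : f x ≤ M := hM ⟨x, by rw [mem_closedBall_zero_iff]; linarith, rfl⟩
  have hnη : M - m ≤ n * η := by
    rw [div_le_iff₀ hη] at hN
    nlinarith [(Nat.cast_le (α := ℝ)).2 hn]
  obtain ⟨j, hj⟩ := exists_subgradient_norm_rpow hp.le x
  set c := (2 : ℝ) ^ (p - 1) * n
  have hminorant : ∀ z, f x - ε + c * (‖x‖ ^ p + j (z - x)) ≤ gnpR p f n z := by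
    intro z
    have hsub : c * (‖x‖ ^ p + j (z - x)) ≤ c * ‖z‖ ^ p := by gcongr; exact hj z
    rcases lt_or_ge ‖z - x‖ r with hzx | hzx
    · have hinf : ∀ y, f x - ε ≤ f y + n * Kp p z y := by
        intro y
        have hKn : 0 ≤ n * Kp p z y := mul_nonneg n.cast_nonneg (Kp_nonneg hp.le z y)
        rcases lt_or_ge ‖z - y‖ r with hzy | hzy
        · have hyx : ‖y - x‖ < 2 * r := by
            calc ‖y - x‖ ≤ ‖z - y‖ + ‖z - x‖ := by
                  rw [norm_sub_rev z y]; exact norm_sub_le_norm_sub_add_norm_sub y z x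
              _ < 2 * r := by linarith
          have hfyx := hfδ y (by
              rw [mem_closedBall_zero_iff]
              linarith [norm_le_norm_add_norm_sub' y x, min_le_right (δ / 2) 1]) x
            (by rw [mem_closedBall_zero_iff]; linarith)
            (by rw [dist_eq_norm]; linarith [min_le_left (δ / 2) 1])
          rw [Real.dist_eq, abs_lt] at hfyx
          linarith
        · have hz : ‖z‖ ≤ R + 1 := by
            linarith [norm_le_norm_add_norm_sub' z x, min_le_right (δ / 2) 1, norm_sub_rev z x]
          nlinarith [hK z y hz hzy, hm y, n.cast_nonneg (α := ℝ)]
      linarith [add_le_gnpR hinf]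
    · have hKx := hK x z (by linarith) (by rwa [norm_sub_rev])
      have hKj := Kp_le_of_subgradient hj z
      have hinf := add_le_gnpR (le_add_mul_Kp hp.le hm n z)
      nlinarith [n.cast_nonneg (α := ℝ)]
  have hφ : ConvexOn ℝ univ fun z => f x - ε + c * (‖x‖ ^ p + j (z - x)) := by
    refine ⟨convex_univ, fun a _ b _ s t _ _ hst => le_of_eq ?_⟩
    simp only [smul_eq_mul, map_sub, map_add, map_smul]
    linear_combination (-(f x - ε + c * (‖x‖ ^ p - j x))) * hst
  have := hφ.le_convEnv hminorant x
  rw [sub_self, map_zero, add_zero] at this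
  rw [DeltaR]
  linarith

end Convergence

theorem stmt_3_general {X : Type*} [NormedAddCommGroup X] [NormedSpace ℝ X]
    (hUC : ∀ ε : ℝ, 0 < ε → ∃ δ : ℝ, 0 < δ ∧
      ∀ x y : X, ‖x‖ = 1 → ‖y‖ = 1 → ε ≤ ‖x - y‖ → ‖x + y‖ / 2 ≤ 1 - δ)
    (p : ℝ) (hp : 1 < p)
    (f : X → ℝ)
    (hbdd : ∃ m : ℝ, ∀ x, m ≤ f x)
    (hucb : ∀ s : Set X, Bornology.IsBounded s → UniformContinuousOn f s) :
    ∀ s : Set X, Bornology.IsBounded s →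
      TendstoUniformlyOn (fun (n : ℕ) (x : X) => DeltaR p f n x) f Filter.atTop s := by
  have : UniformConvexSpace X := ⟨fun ε hε => by
    obtain ⟨δ, hδ, h⟩ := hUC ε hε
    exact ⟨2 * δ, by positivity, fun x hx y hy hxy => by linarith [h x y hx hy hxy]⟩⟩
  obtain ⟨m, hm⟩ := hbdd
  intro s hs
  obtain ⟨R, hR, hsR⟩ := hs.subset_closedBall_lt 0 0
  rw [Metric.tendstoUniformlyOn_iff]
  intro ε hε
  filter_upwards [eventually_sub_le_DeltaR hp hm hR (hucb _ isBounded_closedBall)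
    (half_pos hε)] with n hlower x hx
  have hxR : ‖x‖ ≤ R := mem_closedBall_zero_iff.1 (hsR hx)
  rw [Real.dist_eq, abs_lt]
  constructor <;> linarith [hlower x hxR, DeltaR_le hp.le hm n x]

/-- For a Banach space whose norm is uniformly convex and uniformly smooth, `p > 1`
and `f : X → ℝ` bounded below and uniformly continuous on bounded sets, `Δ_n^p f → f`
uniformly on every bounded subset of `X`. -/
theorem stmt_3 {X : Type*} [NormedAddCommGroup X] [NormedSpace ℝ X] [CompleteSpace X]
    (hUC : ∀ ε : ℝ, 0 < ε → ∃ δ : ℝ, 0 < δ ∧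
      ∀ x y : X, ‖x‖ = 1 → ‖y‖ = 1 → ε ≤ ‖x - y‖ → ‖x + y‖ / 2 ≤ 1 - δ)
    (hUS : Filter.Tendsto
      (fun τ : ℝ => (sSup {r : ℝ | ∃ x y : X, ‖x‖ = 1 ∧ ‖y‖ = 1 ∧
        r = (‖x + τ • y‖ + ‖x - τ • y‖) / 2 - 1}) / τ)
      (nhdsWithin 0 (Set.Ioi (0 : ℝ))) (nhds 0))
    (p : ℝ) (hp : 1 < p)
    (f : X → ℝ)
    (hbdd : ∃ m : ℝ, ∀ x, m ≤ f x)
    (hucb : ∀ s : Set X, Bornology.IsBounded s → UniformContinuousOn f s) :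
    ∀ s : Set X, Bornology.IsBounded s →
      TendstoUniformlyOn (fun (n : ℕ) (x : X) => DeltaR p f n x) f Filter.atTop s :=
  stmt_3_general hUC p hp f hbdd hucb
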